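/- arXiv:2401.02220 — 2 statements merged into one kernel-verified Lean document; each statement's English description precedes it below -/
import Mathlib

section
/- Let D be a set, V_n a finite-dimensional subspace of B(D), and let ρ = Σ_{x∈X} λ_x δ_x be a discrete probability measure supported on a finite multiset X ⊂ D (with λ_x ≥ 0, Σ_{x∈X} λ_x = 1). Suppose there is K > 0 such that ‖f‖_∞ ≤ K ‖f‖_{L₂(ρ)} for all f ∈ V_n. Then the weighted least-squares operator A(ρ,V_n) : B(D) → V_n, defined by A(ρ,V_n)f = argmin_{g∈V_n} Σ_{x∈X} λ_x |g(x) − f(x)|², is a well-defined linear projection onto V_n whose operator norm on B(D) satisfies ‖A(ρ,V_n)‖ ≤ K. -/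
/-! The weighted sampling map `S f = (√λₖ f(xₖ))ₖ` into `𝕜ᴺ` turns the discrete `L₂(ρ)` norm into
the Euclidean norm, and the norming inequality `‖f‖_∞ ≤ K ‖S f‖` makes `S` injective on `V`.
The least-squares problem is therefore the orthogonal projection of `S f` onto `S(V)`, pulled
back to `V`; it is linear, fixes `V`, has a unique solution by the uniqueness of nearest points
in a subspace, and `‖A f‖_∞ ≤ K ‖S (A f)‖ ≤ K ‖S f‖ ≤ K ‖f‖_∞` because orthogonal projections
and `S` (as `∑ λₖ = 1`) are contractions. -/

open Function

namespace Submodule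

variable {𝕜 F : Type*} [RCLike 𝕜] [NormedAddCommGroup F] [InnerProductSpace 𝕜 F]
  {K : Submodule 𝕜 F} [K.HasOrthogonalProjection]

theorem norm_sub_starProjection_le (u : F) {w : F} (hw : w ∈ K) :
    ‖u - K.starProjection u‖ ≤ ‖u - w‖ := by
  rw [starProjection_minimal]
  exact ciInf_le ⟨0, by rintro _ ⟨_, rfl⟩; exact norm_nonneg _⟩ (⟨w, hw⟩ : K)

theorem starProjection_eq_of_forall_norm_sub_le {u v : F} (hv : v ∈ K)
    (hmin : ∀ w ∈ K, ‖u - v‖ ≤ ‖u - w‖) : K.starProjection u = v := by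
  have hinf : ‖u - v‖ = ⨅ w : K, ‖u - w‖ :=
    le_antisymm (le_ciInf fun w => hmin w w.2)
      (ciInf_le ⟨0, by rintro _ ⟨_, rfl⟩; exact norm_nonneg _⟩ (⟨v, hv⟩ : K))
  exact eq_starProjection_of_mem_of_inner_eq_zero hv ((norm_eq_iInf_iff_inner_eq_zero K hv).1 hinf)

end Submodule

section LeastSquares

variable {𝕜 E F : Type*} [RCLike 𝕜] [NormedAddCommGroup F] [InnerProductSpace 𝕜 F]

theorem injective_domRestrict_of_norm_le [NormedAddCommGroup E] [NormedSpace 𝕜 E]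
    {T : E →ₗ[𝕜] F} {V : Submodule 𝕜 E} {K : ℝ} (hV : ∀ f ∈ V, ‖f‖ ≤ K * ‖T f‖) :
    Injective (T.domRestrict V) := by
  rw [← LinearMap.ker_eq_bot, LinearMap.ker_eq_bot']
  intro f hf
  have hbound := hV f f.2
  rw [LinearMap.domRestrict_apply] at hf
  rw [hf, norm_zero, mul_zero] at hbound
  exact Subtype.ext (norm_le_zero_iff.1 hbound)

variable [FiniteDimensional 𝕜 F] [AddCommGroup E] [Module 𝕜 E] {T : E →ₗ[𝕜] F} {V : Submodule 𝕜 E}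

noncomputable def leastSquares (T : E →ₗ[𝕜] F) (V : Submodule 𝕜 E)
    (hT : Injective (T.domRestrict V)) : E →ₗ[𝕜] E :=
  V.subtype ∘ₗ (LinearEquiv.ofInjective _ hT).symm.toLinearMap ∘ₗ
    (LinearMap.range (T.domRestrict V)).orthogonalProjectionOnto.toLinearMap ∘ₗ T

variable (hT : Injective (T.domRestrict V))

theorem leastSquares_mem (f : E) : leastSquares T V hT f ∈ V :=
  Subtype.coe_prop _

theorem apply_leastSquares (f : E) :
    T (leastSquares T V hT f) = (LinearMap.range (T.domRestrict V)).starProjection (T f) :=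
  LinearEquiv.ofInjective_symm_apply (h := hT) (T.domRestrict V) _

theorem norm_apply_leastSquares_sub_le (f : E) {g : E} (hg : g ∈ V) :
    ‖T (leastSquares T V hT f) - T f‖ ≤ ‖T g - T f‖ := by
  rw [norm_sub_rev, norm_sub_rev (T g), apply_leastSquares]
  exact Submodule.norm_sub_starProjection_le _ (LinearMap.mem_range_self _ (⟨g, hg⟩ : V))

theorem eq_leastSquares_of_forall_norm_le {f h : E} (hh : h ∈ V)
    (hmin : ∀ g ∈ V, ‖T h - T f‖ ≤ ‖T g - T f‖) : h = leastSquares T V hT f := by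
  have hproj : (LinearMap.range (T.domRestrict V)).starProjection (T f) = T h := by
    refine Submodule.starProjection_eq_of_forall_norm_sub_le
      (LinearMap.mem_range_self _ (⟨h, hh⟩ : V)) ?_
    rintro _ ⟨g, rfl⟩
    simpa only [LinearMap.domRestrict_apply, norm_sub_rev (T f)] using hmin g g.2
  have hTeq : T.domRestrict V ⟨h, hh⟩ = T.domRestrict V ⟨_, leastSquares_mem hT f⟩ := by
    simp only [LinearMap.domRestrict_apply, apply_leastSquares, hproj]
  exact congrArg Subtype.val (hT hTeq)

theorem leastSquares_of_mem {g : E} (hg : g ∈ V) : leastSquares T V hT g = g :=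
  (eq_leastSquares_of_forall_norm_le hT hg fun _ _ => by simp).symm

theorem norm_apply_leastSquares_le (f : E) : ‖T (leastSquares T V hT f)‖ ≤ ‖T f‖ := by
  rw [apply_leastSquares]
  exact Submodule.norm_orthogonalProjectionOnto_apply_le _ _

end LeastSquares

theorem norm_leastSquares_le {𝕜 E F : Type*} [RCLike 𝕜] [NormedAddCommGroup E] [NormedSpace 𝕜 E]
    [NormedAddCommGroup F] [InnerProductSpace 𝕜 F] [FiniteDimensional 𝕜 F]
    {T : E →ₗ[𝕜] F} {V : Submodule 𝕜 E} {K : ℝ} (hK : 0 ≤ K)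
    (hV : ∀ f ∈ V, ‖f‖ ≤ K * ‖T f‖) (f : E) :
    ‖leastSquares T V (injective_domRestrict_of_norm_le hV) f‖ ≤ K * ‖T f‖ :=
  (hV _ (leastSquares_mem _ f)).trans (by gcongr; exact norm_apply_leastSquares_le _ f)

section WeightedSampling

variable {𝕜 D ι : Type*} [RCLike 𝕜] [TopologicalSpace D] [Fintype ι] (x : ι → D) (lam : ι → ℝ)

noncomputable def weightedSampling : BoundedContinuousFunction D 𝕜 →ₗ[𝕜] EuclideanSpace 𝕜 ι where
  toFun f := WithLp.toLp 2 fun k => (Real.sqrt (lam k) : 𝕜) * f (x k)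
  map_add' f g := by ext k; simp [mul_add]
  map_smul' c f := by ext k; simp [mul_left_comm]

variable {x lam}

theorem norm_weightedSampling_sq (hlam : ∀ k, 0 ≤ lam k) (f : BoundedContinuousFunction D 𝕜) :
    ‖weightedSampling x lam f‖ ^ 2 = ∑ k, lam k * ‖f (x k)‖ ^ 2 := by
  rw [EuclideanSpace.norm_sq_eq]
  refine Finset.sum_congr rfl fun k _ => ?_
  simp [weightedSampling, mul_pow, Real.sq_sqrt (hlam k)]

theorem norm_weightedSampling_le (hlam : ∀ k, 0 ≤ lam k) (hsum : ∑ k, lam k ≤ 1)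
    (f : BoundedContinuousFunction D 𝕜) : ‖weightedSampling x lam f‖ ≤ ‖f‖ := by
  refine (sq_le_sq₀ (norm_nonneg _) (norm_nonneg f)).1 ?_
  calc ‖weightedSampling x lam f‖ ^ 2 = ∑ k, lam k * ‖f (x k)‖ ^ 2 :=
        norm_weightedSampling_sq hlam f
    _ ≤ ∑ k, lam k * ‖f‖ ^ 2 := by
        gcongr with k
        · exact hlam k
        · exact f.norm_coe_le_norm (x k)
    _ = (∑ k, lam k) * ‖f‖ ^ 2 := Finset.sum_mul _ _ _ |>.symm
    _ ≤ ‖f‖ ^ 2 := mul_le_of_le_one_left (by positivity) hsum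

end WeightedSampling

theorem stmt9_general {D : Type*} [TopologicalSpace D]
    (V : Submodule ℂ (BoundedContinuousFunction D ℂ))
    (N : ℕ) (x : Fin N → D) (lam : Fin N → ℝ)
    (hlam : ∀ k, 0 ≤ lam k) (hsum : ∑ k, lam k = 1)
    (K : ℝ) (hK : 0 < K)
    (hdisc : ∀ f ∈ V, ‖f‖ ≤ K * Real.sqrt (∑ k, lam k * ‖f (x k)‖ ^ 2)) :
    ∃ A : BoundedContinuousFunction D ℂ →ₗ[ℂ] BoundedContinuousFunction D ℂ,
      (∀ f, A f ∈ V ∧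
        ∀ g ∈ V, ∑ k, lam k * ‖A f (x k) - f (x k)‖ ^ 2
          ≤ ∑ k, lam k * ‖g (x k) - f (x k)‖ ^ 2) ∧
      (∀ (f h : BoundedContinuousFunction D ℂ), h ∈ V →
        (∀ g ∈ V, ∑ k, lam k * ‖h (x k) - f (x k)‖ ^ 2
          ≤ ∑ k, lam k * ‖g (x k) - f (x k)‖ ^ 2) →
        h = A f) ∧
      (∀ g ∈ V, A g = g) ∧
      (∀ f, ‖A f‖ ≤ K * ‖f‖) := by
  set T := weightedSampling (𝕜 := ℂ) x lam
  have hdist (g f : BoundedContinuousFunction D ℂ) :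
      ∑ k, lam k * ‖g (x k) - f (x k)‖ ^ 2 = ‖T g - T f‖ ^ 2 := by
    rw [← map_sub, norm_weightedSampling_sq hlam]
    rfl
  have hV : ∀ f ∈ V, ‖f‖ ≤ K * ‖T f‖ := fun f hf => by
    simpa only [← norm_weightedSampling_sq hlam, Real.sqrt_sq (norm_nonneg _)] using hdisc f hf
  have hT := injective_domRestrict_of_norm_le hV
  refine ⟨leastSquares T V hT, fun f => ⟨leastSquares_mem hT f, fun g hg => ?_⟩,
    fun f h hh hmin => eq_leastSquares_of_forall_norm_le hT hh fun g hg => ?_,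
    fun g hg => leastSquares_of_mem hT hg, fun f => ?_⟩
  · rw [hdist, hdist]
    gcongr
    exact norm_apply_leastSquares_sub_le hT f hg
  · have hsq := hmin g hg
    rwa [hdist, hdist, sq_le_sq₀ (norm_nonneg _) (norm_nonneg _)] at hsq
  · calc ‖leastSquares T V hT f‖ ≤ K * ‖T f‖ := norm_leastSquares_le hK.le hV f
      _ ≤ K * ‖f‖ := by gcongr; exact norm_weightedSampling_le hlam hsum.le f

/-- **Sampling projections via weighted least squares.**
Let `D` be a set (a type with the discrete topology, so `BoundedContinuousFunction D ℂ` is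
the space `B(D)` of bounded complex functions with sup-norm), `V` a finite-dimensional
subspace of `B(D)`, and `ρ = ∑ k, λ k δ_{x k}` a discrete probability measure on `D`
(given by finitely many points `x k` and weights `λ k ≥ 0` with `∑ λ k = 1`). If
`‖f‖_∞ ≤ K ‖f‖_{L₂(ρ)}` for all `f ∈ V`, then the weighted least-squares operator
`A(ρ,V)` — the map sending `f` to the (unique) minimizer over `g ∈ V` of
`∑ k, λ k |g (x k) - f (x k)|²` — is a well-defined linear projection onto `V` with
operator norm at most `K`. -/
theorem stmt9 {D : Type*} [TopologicalSpace D] [DiscreteTopology D]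
    (V : Submodule ℂ (BoundedContinuousFunction D ℂ)) [FiniteDimensional ℂ V]
    (N : ℕ) (x : Fin N → D) (lam : Fin N → ℝ)
    (hlam : ∀ k, 0 ≤ lam k) (hsum : ∑ k, lam k = 1)
    (K : ℝ) (hK : 0 < K)
    (hdisc : ∀ f ∈ V, ‖f‖ ≤ K * Real.sqrt (∑ k, lam k * ‖f (x k)‖ ^ 2)) :
    ∃ A : BoundedContinuousFunction D ℂ →ₗ[ℂ] BoundedContinuousFunction D ℂ,
      (∀ f, A f ∈ V ∧
        ∀ g ∈ V, ∑ k, lam k * ‖A f (x k) - f (x k)‖ ^ 2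
          ≤ ∑ k, lam k * ‖g (x k) - f (x k)‖ ^ 2) ∧
      (∀ (f h : BoundedContinuousFunction D ℂ), h ∈ V →
        (∀ g ∈ V, ∑ k, lam k * ‖h (x k) - f (x k)‖ ^ 2
          ≤ ∑ k, lam k * ‖g (x k) - f (x k)‖ ^ 2) →
        h = A f) ∧
      (∀ g ∈ V, A g = g) ∧
      (∀ f, ‖A f‖ ≤ K * ‖f‖) :=
  stmt9_general V N x lam hlam hsum K hK hdisc
end

section
/- Let D be a set, G a subspace of B(D), and ‖·‖ a seminorm on G with ‖f‖ ≤ ‖f‖_∞ for all f ∈ G. Let V_n be a finite-dimensional subspace of G and X ⊂ D a finite multiset such that ‖·‖_X is a norm on V_n and ‖g‖ ≤ C ‖g‖_X for all g ∈ V_n, for some C > 0. Then the least-squares algorithm A(X,V_n) is well defined on B(D) and for all f ∈ G, ‖f − A(X,V_n)f‖ ≤ (1 + C) · inf_{g∈V_n} ‖f − g‖_∞. -/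
/-- The seminorm `‖f‖_X = ((1/|X|) ∑_{x ∈ X} |f x|²)^{1/2}` associated with a finite
multiset `X` of points of `D`, on the space `B(D)` of bounded functions. -/
noncomputable def msNorm {D : Type*} [TopologicalSpace D] [DiscreteTopology D]
    (X : Multiset D) (f : BoundedContinuousFunction D ℂ) : ℝ :=
  Real.sqrt ((X.map fun x => ‖f x‖ ^ 2).sum / X.card)

/-! Evaluation at the points of `X`, scaled by `|X|^{-1/2}`, is a linear map into a
finite-dimensional Hilbert space under which `‖·‖_X` becomes the Euclidean norm. Least-squares
fits from `V` are therefore exactly the preimages in `V` of the orthogonal projection of the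
sampled `f` onto the sampled `V`: they exist, they are unique once `‖·‖_X` is a norm on `V`, and
by Pythagoras `‖g - A f‖_X ≤ ‖g - f‖_X` for `g ∈ V`. Hence
`ν (f - A f) ≤ ν (f - g) + C ‖g - A f‖_X ≤ ‖f - g‖_∞ + C ‖g - f‖_∞`. -/

namespace Submodule

variable {𝕜 E : Type*} [RCLike 𝕜] [NormedAddCommGroup E] [InnerProductSpace 𝕜 E]
  (K : Submodule 𝕜 E) [K.HasOrthogonalProjection]

theorem norm_sub_sq_eq_norm_sub_starProjection_sq_add (u : E) {k : E} (hk : k ∈ K) :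
    ‖k - u‖ ^ 2 = ‖k - K.starProjection u‖ ^ 2 + ‖K.starProjection u - u‖ ^ 2 := by
  have horth : inner 𝕜 (k - K.starProjection u) (K.starProjection u - u) = 0 := by
    rw [← neg_sub u, inner_neg_right, inner_eq_zero_symm.1
      (K.starProjection_inner_eq_zero u _ (K.sub_mem hk (K.starProjection_apply_mem u))), neg_zero]
  simpa only [sq, sub_add_sub_cancel] using
    norm_add_sq_eq_norm_sq_add_norm_sq_of_inner_eq_zero _ _ horth

theorem norm_sub_starProjection_le_s10 (u : E) {k : E} (hk : k ∈ K) :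
    ‖k - K.starProjection u‖ ≤ ‖k - u‖ := by
  rw [← pow_le_pow_iff_left₀ (norm_nonneg _) (norm_nonneg _) two_ne_zero,
    K.norm_sub_sq_eq_norm_sub_starProjection_sq_add u hk]
  exact le_add_of_nonneg_right (sq_nonneg _)

theorem forall_norm_sub_le_iff_eq_starProjection (u : E) {w : E} (hw : w ∈ K) :
    (∀ k ∈ K, ‖w - u‖ ≤ ‖k - u‖) ↔ w = K.starProjection u := by
  have hpyth {k : E} (hk : k ∈ K) := K.norm_sub_sq_eq_norm_sub_starProjection_sq_add u hk
  constructor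
  · intro hmin
    have hle := pow_le_pow_left₀ (norm_nonneg _) (hmin _ (K.starProjection_apply_mem u)) 2
    rw [hpyth hw] at hle
    have hzero : ‖w - K.starProjection u‖ ^ 2 = 0 :=
      le_antisymm (by linarith) (sq_nonneg _)
    simpa [sub_eq_zero] using hzero
  · rintro rfl k hk
    rw [← pow_le_pow_iff_left₀ (norm_nonneg _) (norm_nonneg _) two_ne_zero, hpyth hk]
    exact le_add_of_nonneg_left (sq_nonneg _)

theorem forall_norm_map_sub_le_iff {N : Type*} [AddCommGroup N] [Module 𝕜 N] (Ψ : N →ₗ[𝕜] E)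
    {V : Submodule 𝕜 N} [(V.map Ψ).HasOrthogonalProjection] (u : E) {h : N} (hh : h ∈ V) :
    (∀ g ∈ V, ‖Ψ h - u‖ ≤ ‖Ψ g - u‖) ↔ Ψ h = (V.map Ψ).starProjection u := by
  rw [← forall_norm_sub_le_iff_eq_starProjection _ u (mem_map_of_mem hh)]
  simp only [mem_map, forall_exists_index, and_imp, forall_apply_eq_imp_iff₂]

end Submodule

section LeastSquares

variable {D : Type*} [TopologicalSpace D] [DiscreteTopology D]

noncomputable def sampleMap (X : Multiset D) :
    BoundedContinuousFunction D ℂ →ₗ[ℂ] EuclideanSpace ℂ (Fin X.toList.length) where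
  toFun f := (√(X.card : ℝ))⁻¹ • WithLp.toLp 2 fun i => f X.toList[i]
  map_add' f g := by ext i; simp
  map_smul' c f := by ext i; simp [mul_left_comm]

theorem msNorm_eq_norm_sampleMap (X : Multiset D) (f : BoundedContinuousFunction D ℂ) :
    msNorm X f = ‖sampleMap X f‖ := by
  rw [msNorm, sampleMap, LinearMap.coe_mk, AddHom.coe_mk, norm_smul, EuclideanSpace.norm_eq,
    Real.sqrt_div' _ (Nat.cast_nonneg _)]
  simp only [Fin.getElem_fin, Real.norm_eq_abs, abs_inv, abs_of_nonneg (Real.sqrt_nonneg _)]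
  rw [Fin.sum_univ_fun_getElem X.toList fun x => ‖f x‖ ^ 2, Multiset.sum_map_toList,
    div_eq_inv_mul]

theorem msNorm_le_norm (X : Multiset D) (f : BoundedContinuousFunction D ℂ) :
    msNorm X f ≤ ‖f‖ := by
  refine (Real.sqrt_le_left (norm_nonneg f)).2 <|
    div_le_of_le_mul₀ (Nat.cast_nonneg _) (sq_nonneg _) ?_
  have hsum := Multiset.sum_le_card_nsmul (X.map fun x => ‖f x‖ ^ 2) (‖f‖ ^ 2) <| by
    simp only [Multiset.mem_map, forall_exists_index, and_imp, forall_apply_eq_imp_iff₂]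
    exact fun x _ => pow_le_pow_left₀ (norm_nonneg _) (f.norm_coe_le_norm x) 2
  simpa [mul_comm] using hsum

variable {G : Submodule ℂ (BoundedContinuousFunction D ℂ)} (X : Multiset D) (V : Submodule ℂ G)

def IsLeastSquaresFit (f : BoundedContinuousFunction D ℂ) (h : G) : Prop :=
  h ∈ V ∧ ∀ g ∈ V, msNorm X (G.subtype h - f) ≤ msNorm X (G.subtype g - f)

theorem isLeastSquaresFit_iff {f : BoundedContinuousFunction D ℂ} {h : G} :
    IsLeastSquaresFit X V f h ↔ h ∈ V ∧
      sampleMap X h = (V.map ((sampleMap X).comp G.subtype)).starProjection (sampleMap X f) := by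
  simp only [IsLeastSquaresFit, msNorm_eq_norm_sampleMap, map_sub]
  exact and_congr_right fun hh =>
    Submodule.forall_norm_map_sub_le_iff ((sampleMap X).comp G.subtype) _ hh

theorem exists_isLeastSquaresFit (f : BoundedContinuousFunction D ℂ) :
    ∃ h, IsLeastSquaresFit X V f h := by
  obtain ⟨h, hh, hproj⟩ := Submodule.mem_map.1 <|
    (V.map ((sampleMap X).comp G.subtype)).starProjection_apply_mem (sampleMap X f)
  exact ⟨h, (isLeastSquaresFit_iff X V).2 ⟨hh, hproj⟩⟩

variable {X V}

theorem IsLeastSquaresFit.unique (hX : ∀ g ∈ V, msNorm X (G.subtype g) = 0 → g = 0)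
    {f : BoundedContinuousFunction D ℂ} {h₁ h₂ : G} (h₁fit : IsLeastSquaresFit X V f h₁)
    (h₂fit : IsLeastSquaresFit X V f h₂) : h₁ = h₂ := by
  rw [isLeastSquaresFit_iff] at h₁fit h₂fit
  refine sub_eq_zero.1 (hX _ (V.sub_mem h₁fit.1 h₂fit.1) ?_)
  rw [msNorm_eq_norm_sampleMap, map_sub, map_sub, Submodule.subtype_apply,
    Submodule.subtype_apply, h₁fit.2, h₂fit.2, sub_self, norm_zero]

theorem IsLeastSquaresFit.msNorm_sub_le {f : BoundedContinuousFunction D ℂ} {h : G}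
    (hfit : IsLeastSquaresFit X V f h) {g : G} (hg : g ∈ V) :
    msNorm X (G.subtype (g - h)) ≤ msNorm X (G.subtype g - f) := by
  rw [isLeastSquaresFit_iff] at hfit
  rw [msNorm_eq_norm_sampleMap, msNorm_eq_norm_sampleMap, map_sub, map_sub, map_sub,
    Submodule.subtype_apply h, hfit.2]
  exact Submodule.norm_sub_starProjection_le_s10 _ _ (Submodule.mem_map_of_mem hg)

theorem IsLeastSquaresFit.seminorm_sub_le (ν : Seminorm ℂ G)
    (hν : ∀ f : G, ν f ≤ ‖(f : BoundedContinuousFunction D ℂ)‖) {C : ℝ} (hC : 0 ≤ C)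
    (hdisc : ∀ g ∈ V, ν g ≤ C * msNorm X (G.subtype g)) {f h : G}
    (hfit : IsLeastSquaresFit X V f h) {g : G} (hg : g ∈ V) :
    ν (f - h) ≤ (1 + C) * ‖(f : BoundedContinuousFunction D ℂ) - g‖ := by
  calc ν (f - h) ≤ ν (f - g) + ν (g - h) := by
        simpa only [sub_add_sub_cancel] using map_add_le_add ν (f - g) (g - h)
    _ ≤ ‖(f : BoundedContinuousFunction D ℂ) - g‖ + C * msNorm X (G.subtype (g - h)) :=
        add_le_add (hν _) (hdisc _ (V.sub_mem hg hfit.1))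
    _ ≤ ‖(f : BoundedContinuousFunction D ℂ) - g‖ + C * msNorm X (G.subtype g - f) := by
        gcongr
        exact hfit.msNorm_sub_le hg
    _ ≤ ‖(f : BoundedContinuousFunction D ℂ) - g‖ +
          C * ‖(f : BoundedContinuousFunction D ℂ) - g‖ := by
        gcongr
        exact (msNorm_le_norm X _).trans_eq (norm_sub_rev _ _)
    _ = (1 + C) * ‖(f : BoundedContinuousFunction D ℂ) - g‖ := by ring

end LeastSquares

theorem stmt10_general {D : Type*} [TopologicalSpace D] [DiscreteTopology D]
    (G : Submodule ℂ (BoundedContinuousFunction D ℂ))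
    (ν : Seminorm ℂ G)
    (hν : ∀ f : G, ν f ≤ ‖(f : BoundedContinuousFunction D ℂ)‖)
    (V : Submodule ℂ G)
    (X : Multiset D)
    (hX : ∀ g ∈ V, msNorm X (G.subtype g) = 0 → g = 0)
    (C : ℝ) (hC : 0 < C)
    (hdisc : ∀ g ∈ V, ν g ≤ C * msNorm X (G.subtype g))
    (A : BoundedContinuousFunction D ℂ → G)
    (hA : ∀ f, A f ∈ V ∧
      ∀ g ∈ V, msNorm X (G.subtype (A f) - f) ≤ msNorm X (G.subtype g - f)) :
    (∀ f : BoundedContinuousFunction D ℂ, ∃! h : G, h ∈ V ∧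
      ∀ g ∈ V, msNorm X (G.subtype h - f) ≤ msNorm X (G.subtype g - f)) ∧
    ∀ f : G, ν (f - A f) ≤
      (1 + C) * ⨅ g : V,
        ‖(f : BoundedContinuousFunction D ℂ) - ((g : G) : BoundedContinuousFunction D ℂ)‖ := by
  refine ⟨fun f => ?_, fun f => ?_⟩
  · obtain ⟨h, hfit⟩ := exists_isLeastSquaresFit X V f
    exact ⟨h, hfit, fun h' hfit' => IsLeastSquaresFit.unique hX hfit' hfit⟩
  · rw [Real.mul_iInf_of_nonneg (by linarith)]
    exact le_ciInf fun g => IsLeastSquaresFit.seminorm_sub_le ν hν hC.le hdisc (hA f) g.2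

/-- **Error of least squares in a general seminorm.**
Let `D` be a set (a type with the discrete topology, so `BoundedContinuousFunction D ℂ` is
`B(D)`, the bounded complex functions with sup-norm), `G` a subspace of `B(D)`, and `ν` a
seminorm on `G` with `ν f ≤ ‖f‖_∞`. Let `V` be a finite-dimensional subspace of `G` and
`X ⊆ D` a finite multiset such that `‖·‖_X` is a norm on `V` and `ν g ≤ C ‖g‖_X` on `V`
for some `C > 0`. Then the least-squares algorithm `A(X,V)` is well defined on `B(D)`
(for each `f` there is a unique minimizer in `V` of `g ↦ ‖g - f‖_X`), and any such
minimizing map `A` satisfies `ν (f - A f) ≤ (1 + C) inf_{g ∈ V} ‖f - g‖_∞` for `f ∈ G`. -/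
theorem stmt10 {D : Type*} [TopologicalSpace D] [DiscreteTopology D]
    (G : Submodule ℂ (BoundedContinuousFunction D ℂ))
    (ν : Seminorm ℂ G)
    (hν : ∀ f : G, ν f ≤ ‖(f : BoundedContinuousFunction D ℂ)‖)
    (V : Submodule ℂ G) [FiniteDimensional ℂ V]
    (X : Multiset D)
    (hX : ∀ g ∈ V, msNorm X (G.subtype g) = 0 → g = 0)
    (C : ℝ) (hC : 0 < C)
    (hdisc : ∀ g ∈ V, ν g ≤ C * msNorm X (G.subtype g))
    (A : BoundedContinuousFunction D ℂ → G)
    (hA : ∀ f, A f ∈ V ∧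
      ∀ g ∈ V, msNorm X (G.subtype (A f) - f) ≤ msNorm X (G.subtype g - f)) :
    (∀ f : BoundedContinuousFunction D ℂ, ∃! h : G, h ∈ V ∧
      ∀ g ∈ V, msNorm X (G.subtype h - f) ≤ msNorm X (G.subtype g - f)) ∧
    ∀ f : G, ν (f - A f) ≤
      (1 + C) * ⨅ g : V,
        ‖(f : BoundedContinuousFunction D ℂ) - ((g : G) : BoundedContinuousFunction D ℂ)‖ :=
  stmt10_general G ν hν V X hX C hC hdisc A hA
end
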